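/- arXiv:2409.03739 — 2 statements merged into one kernel-verified Lean document; each statement's English description precedes it below -/
import Mathlib

section
/- If N ∈ cut_d(m₁,m₂) and α, η_A, η_B ∈ [0,1], and P ∈ cut_d(m₁,m₂) has underlying vectors a_x, b_y such that η_A·S^{d-1} ⊆ conv{a_x} and η_B·S^{d-1} ⊆ conv{b_y} and α·P ∈ cut_n(m₁,m₂), then α·η_A·η_B·N ∈ cut_n(m₁,m₂). Consequently, for every real matrix M, α·η_A·η_B·SDP_d(M) ≤ SDP_n(M). -/
/-- `SDP k m₁ m₂ M` is the maximum of `∑ x y, M x y * ⟨a x, b y⟩` over families of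
unit vectors `a x`, `b y` in the unit sphere of `ℝ^k`. -/
noncomputable def SDP (k m₁ m₂ : ℕ) (M : Matrix (Fin m₁) (Fin m₂) ℝ) : ℝ :=
  sSup { r : ℝ | ∃ (a : Fin m₁ → EuclideanSpace ℝ (Fin k)) (b : Fin m₂ → EuclideanSpace ℝ (Fin k)),
    (∀ x, ‖a x‖ = 1) ∧ (∀ y, ‖b y‖ = 1) ∧
    r = ∑ x, ∑ y, M x y * (inner ℝ (a x) (b y) : ℝ) }

/-- `cut k m₁ m₂` is the convex hull of the matrices of inner products of families of
unit vectors in `ℝ^k`. -/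
noncomputable def cut (k m₁ m₂ : ℕ) : Set (Matrix (Fin m₁) (Fin m₂) ℝ) :=
  convexHull ℝ { X | ∃ (a : Fin m₁ → EuclideanSpace ℝ (Fin k)) (b : Fin m₂ → EuclideanSpace ℝ (Fin k)),
    (∀ x, ‖a x‖ = 1) ∧ (∀ y, ‖b y‖ = 1) ∧
    ∀ x y, X x y = (inner ℝ (a x) (b y) : ℝ) }

/-!
Every matrix of `cut d` is a convex combination of matrices `(⟨u x, v y⟩)` with unit vectors
`u x`, `v y`, so it suffices to shrink those. Writing `ηA • u x = ∑ i, Λ x i • a i` and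
`ηB • v y = ∑ j, Μ y j • b j` as convex combinations gives
`α ηA ηB (⟨u x, v y⟩) = Λ (α P) Μᵀ`, and `cut n` is stable under `X ↦ Λ X Μᵀ` for row-stochastic
`Λ`, `Μ`: on a generator this produces the inner products of convex combinations of unit vectors,
which lie in the unit ball, the convex hull of the unit sphere. The bound on `SDP` follows because
`SDP k M` is the supremum over `cut k` of the linear functional `X ↦ ∑ x y, M x y * X x y`.
-/

open Set Metric
open scoped Matrix

theorem exists_mem_stdSimplex_of_mem_convexHull_range {R E ι : Type*} [Field R] [LinearOrder R]
    [IsStrictOrderedRing R] [AddCommGroup E] [Module R E] [Fintype ι] {v : ι → E} {x : E}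
    (hx : x ∈ convexHull R (range v)) : ∃ w ∈ stdSimplex R ι, ∑ i, w i • v i = x := by
  classical
  have hv : range v = Fintype.linearCombination R v '' range fun i ↦ Pi.single i 1 := by
    rw [← range_comp]; congr 1; ext i; simp
  rwa [hv, ← LinearMap.image_convexHull, convexHull_rangle_single_eq_stdSimplex] at hx

theorem LinearMap.image2_convexHull_subset {R E F G : Type*} [Field R] [LinearOrder R]
    [IsStrictOrderedRing R] [AddCommGroup E] [Module R E] [AddCommGroup F] [Module R F]
    [AddCommGroup G] [Module R G] (f : E →ₗ[R] F →ₗ[R] G) (s : Set E) (t : Set F) :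
    image2 (fun x y ↦ f x y) (convexHull R s) (convexHull R t) ⊆
      convexHull R (image2 (fun x y ↦ f x y) s t) := by
  rintro _ ⟨x, hx, y, hy, rfl⟩
  have hxy : ∀ x ∈ s, f x y ∈ convexHull R (image2 (fun x y ↦ f x y) s t) := fun x hx ↦ by
    have hsub : f x '' t ⊆ image2 (fun x y ↦ f x y) s t :=
      image_subset_image2_right (f := fun x y ↦ f x y) hx
    exact convexHull_mono hsub ((f x).image_convexHull t ▸ mem_image_of_mem _ hy)
  exact convexHull_min hxy ((convex_convexHull R _).linear_preimage (f.flip y)) hx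

section innerMatrix

variable {ι κ E : Type*} [NormedAddCommGroup E] [InnerProductSpace ℝ E]

def innerMatrix : (ι → E) →ₗ[ℝ] (κ → E) →ₗ[ℝ] Matrix ι κ ℝ :=
  LinearMap.mk₂ ℝ (fun a b ↦ Matrix.of fun x y ↦ inner ℝ (a x) (b y))
    (fun _ _ _ ↦ by ext; simp [inner_add_left]) (fun _ _ _ ↦ by ext; simp [real_inner_smul_left])
    (fun _ _ _ ↦ by ext; simp [inner_add_right]) (fun _ _ _ ↦ by ext; simp [real_inner_smul_right])

@[simp]
theorem innerMatrix_apply (a : ι → E) (b : κ → E) (x : ι) (y : κ) :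
    innerMatrix a b x y = inner ℝ (a x) (b y) :=
  rfl

theorem mul_innerMatrix_mul_transpose {ι' κ' : Type*} [Fintype ι] [Fintype κ]
    (Λ : Matrix ι' ι ℝ) (a : ι → E) (b : κ → E) (Μ : Matrix κ' κ ℝ) :
    Λ * innerMatrix a b * Μᵀ =
      innerMatrix (fun x ↦ ∑ i, Λ x i • a i) (fun y ↦ ∑ j, Μ y j • b j) := by
  ext x y
  simp only [Matrix.mul_apply, Matrix.transpose_apply, innerMatrix_apply, sum_inner, inner_sum,
    real_inner_smul_left, real_inner_smul_right, Finset.sum_mul]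
  refine Finset.sum_congr rfl fun _ _ ↦ Finset.sum_congr rfl fun _ _ ↦ ?_
  ring

end innerMatrix

theorem cut_eq_convexHull_image2 (k m₁ m₂ : ℕ) :
    cut k m₁ m₂ = convexHull ℝ (image2 (fun a b ↦ innerMatrix a b)
      (univ.pi fun _ ↦ sphere (0 : EuclideanSpace ℝ (Fin k)) 1)
      (univ.pi fun _ ↦ sphere (0 : EuclideanSpace ℝ (Fin k)) 1)) := by
  unfold cut
  congr 1
  ext X
  simp only [mem_ofPred_eq, mem_image2, mem_pi, mem_univ, true_implies, mem_sphere_zero_iff_norm,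
    ← Matrix.ext_iff, innerMatrix_apply]
  aesop

theorem innerMatrix_mem_cut {k m₁ m₂ : ℕ} {a : Fin m₁ → EuclideanSpace ℝ (Fin k)}
    {b : Fin m₂ → EuclideanSpace ℝ (Fin k)} (ha : ∀ x, ‖a x‖ = 1) (hb : ∀ y, ‖b y‖ = 1) :
    innerMatrix a b ∈ cut k m₁ m₂ :=
  subset_convexHull ℝ _ ⟨a, b, ha, hb, fun _ _ ↦ rfl⟩

theorem pos_of_mem_cut {k m₁ m₂ : ℕ} [Nonempty (Fin m₁)] {X : Matrix (Fin m₁) (Fin m₂) ℝ}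
    (hX : X ∈ cut k m₁ m₂) : 0 < k := by
  rw [cut_eq_convexHull_image2] at hX
  obtain ⟨_, a, ha, -, -, -⟩ := convexHull_nonempty_iff.mp ⟨X, hX⟩
  have hx := ha (Classical.arbitrary _) (mem_univ _)
  refine Nat.pos_of_ne_zero fun hk ↦ ?_
  subst hk
  simp [Subsingleton.elim (a (Classical.arbitrary _)) 0] at hx

theorem innerMatrix_mem_cut_of_norm_le_one {k m₁ m₂ : ℕ} (hk : 0 < k)
    {a : Fin m₁ → EuclideanSpace ℝ (Fin k)} {b : Fin m₂ → EuclideanSpace ℝ (Fin k)}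
    (ha : ∀ x, ‖a x‖ ≤ 1) (hb : ∀ y, ‖b y‖ ≤ 1) : innerMatrix a b ∈ cut k m₁ m₂ := by
  have : Nonempty (Fin k) := ⟨⟨0, hk⟩⟩
  have hball {m : ℕ} {c : Fin m → EuclideanSpace ℝ (Fin k)} (hc : ∀ x, ‖c x‖ ≤ 1) :
      c ∈ convexHull ℝ (univ.pi fun _ ↦ sphere 0 1) :=
    mem_convexHull_pi fun x _ ↦ by
      rw [convexHull_sphere_eq_closedBall 0 zero_le_one, mem_closedBall_zero_iff]
      exact hc x
  rw [cut_eq_convexHull_image2]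
  apply LinearMap.image2_convexHull_subset
  exact mem_image2_of_mem (hball ha) (hball hb)

theorem mul_mul_transpose_mem_cut {k m₁ m₂ : ℕ} {Λ : Matrix (Fin m₁) (Fin m₁) ℝ}
    {Μ : Matrix (Fin m₂) (Fin m₂) ℝ} (hΛ : ∀ x, Λ x ∈ stdSimplex ℝ (Fin m₁))
    (hΜ : ∀ y, Μ y ∈ stdSimplex ℝ (Fin m₂)) {Q : Matrix (Fin m₁) (Fin m₂) ℝ}
    (hQ : Q ∈ cut k m₁ m₂) : Λ * Q * Μᵀ ∈ cut k m₁ m₂ := by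
  cases isEmpty_or_nonempty (Fin m₁)
  · rwa [Subsingleton.elim (Λ * Q * Μᵀ) Q]
  have hk := pos_of_mem_cut hQ
  have hnorm {m : ℕ} {W : Matrix (Fin m) (Fin m) ℝ} (hW : ∀ x, W x ∈ stdSimplex ℝ (Fin m))
      {c : Fin m → EuclideanSpace ℝ (Fin k)} (hc : ∀ i, ‖c i‖ = 1) (x : Fin m) :
      ‖∑ i, W x i • c i‖ ≤ 1 := by
    rw [← mem_closedBall_zero_iff]
    exact (convex_closedBall 0 1).sum_mem (fun i _ ↦ (hW x).1 i) (hW x).2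
      fun i _ ↦ by simp [hc i]
  let L := (mulRightLinearMap (Fin m₁) ℝ Μᵀ).comp (mulLeftLinearMap (Fin m₂) ℝ Λ)
  rw [cut_eq_convexHull_image2] at hQ
  refine convexHull_min ?_ ((convex_convexHull ℝ _).linear_preimage L) hQ
  rintro _ ⟨a, ha, b, hb, rfl⟩
  simp only [mem_pi, mem_univ, true_implies, mem_sphere_zero_iff_norm] at ha hb
  show Λ * innerMatrix a b * Μᵀ ∈ cut k m₁ m₂
  rw [mul_innerMatrix_mul_transpose]
  exact innerMatrix_mem_cut_of_norm_le_one hk (hnorm hΛ ha) (hnorm hΜ hb)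

theorem smul_mem_cut_of_sphere_subset_convexHull {d n m₁ m₂ : ℕ} {α ηA ηB : ℝ}
    (hηA : 0 ≤ ηA) (hηB : 0 ≤ ηB)
    {a : Fin m₁ → EuclideanSpace ℝ (Fin d)} {b : Fin m₂ → EuclideanSpace ℝ (Fin d)}
    (hA : ∀ v : EuclideanSpace ℝ (Fin d), ‖v‖ = ηA → v ∈ convexHull ℝ (range a))
    (hB : ∀ w : EuclideanSpace ℝ (Fin d), ‖w‖ = ηB → w ∈ convexHull ℝ (range b))
    (hαP : α • innerMatrix a b ∈ cut n m₁ m₂) {N : Matrix (Fin m₁) (Fin m₂) ℝ}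
    (hN : N ∈ cut d m₁ m₂) : (α * ηA * ηB) • N ∈ cut n m₁ m₂ := by
  rw [cut_eq_convexHull_image2] at hN
  refine convexHull_min ?_ ((convex_convexHull ℝ _).smul_preimage _) hN
  rintro _ ⟨u, hu, v, hv, rfl⟩
  simp only [mem_pi, mem_univ, true_implies, mem_sphere_zero_iff_norm] at hu hv
  choose Λ hΛ hΛa using fun x ↦ exists_mem_stdSimplex_of_mem_convexHull_range
    (hA (ηA • u x) (by simp [norm_smul, hu x, abs_of_nonneg hηA]))
  choose Μ hΜ hΜb using fun y ↦ exists_mem_stdSimplex_of_mem_convexHull_range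
    (hB (ηB • v y) (by simp [norm_smul, hv y, abs_of_nonneg hηB]))
  have hmix : Matrix.of Λ * (α • innerMatrix a b) * (Matrix.of Μ)ᵀ =
      (α * ηA * ηB) • innerMatrix u v := by
    rw [Matrix.mul_smul, Matrix.smul_mul, mul_innerMatrix_mul_transpose]
    simp only [Matrix.of_apply]
    rw [show (fun x ↦ ∑ i, Λ x i • a i) = ηA • u from funext hΛa,
      show (fun y ↦ ∑ j, Μ y j • b j) = ηB • v from funext hΜb,
      map_smul, map_smul, LinearMap.smul_apply, smul_smul, smul_smul, mul_right_comm]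
  show (α * ηA * ηB) • innerMatrix u v ∈ cut n m₁ m₂
  rw [← hmix]
  exact mul_mul_transpose_mem_cut hΛ hΜ hαP

theorem sum_mul_le_SDP_of_mem_cut {k m₁ m₂ : ℕ} (M : Matrix (Fin m₁) (Fin m₂) ℝ)
    {X : Matrix (Fin m₁) (Fin m₂) ℝ} (hX : X ∈ cut k m₁ m₂) :
    ∑ x, ∑ y, M x y * X x y ≤ SDP k m₁ m₂ M := by
  have hlin : IsLinearMap ℝ fun X : Matrix (Fin m₁) (Fin m₂) ℝ ↦ ∑ x, ∑ y, M x y * X x y :=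
    ⟨fun X Y ↦ by simp [mul_add, Finset.sum_add_distrib],
      fun c X ↦ by simp [Finset.mul_sum, mul_left_comm]⟩
  refine convexHull_min ?_ (convex_halfSpace_le hlin _) hX
  rintro X ⟨a, b, ha, hb, hX⟩
  refine le_csSup ⟨∑ x, ∑ y, |M x y|, ?_⟩ ⟨a, b, ha, hb, by simp only [hX]⟩
  rintro _ ⟨a, b, ha, hb, rfl⟩
  gcongr with x _ y _
  have hab : |inner ℝ (a x) (b y)| ≤ 1 := by
    simpa [ha x, hb y] using abs_real_inner_le_norm (a x) (b y)
  calc M x y * inner ℝ (a x) (b y) ≤ |M x y| * |inner ℝ (a x) (b y)| :=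
        (le_abs_self _).trans (abs_mul _ _).le
    _ ≤ |M x y| := mul_le_of_le_one_right (abs_nonneg _) hab

theorem mul_SDP_le_SDP_of_smul_mem_cut {d n m₁ m₂ : ℕ} {c : ℝ} (hc : 0 ≤ c)
    (hd : (cut d m₁ m₂).Nonempty) (h : ∀ N ∈ cut d m₁ m₂, c • N ∈ cut n m₁ m₂)
    (M : Matrix (Fin m₁) (Fin m₂) ℝ) : c * SDP d m₁ m₂ M ≤ SDP n m₁ m₂ M := by
  obtain ⟨_, a, b, ha, hb, -⟩ := convexHull_nonempty_iff.mp hd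
  rw [SDP, ← smul_eq_mul, ← Real.sSup_smul_of_nonneg hc]
  refine csSup_le (Nonempty.smul_set ⟨_, a, b, ha, hb, rfl⟩) ?_
  rintro _ ⟨_, ⟨a, b, ha, hb, rfl⟩, rfl⟩
  calc c • ∑ x, ∑ y, M x y * inner ℝ (a x) (b y)
      = ∑ x, ∑ y, M x y * (c • innerMatrix a b) x y := by
        simp [Finset.mul_sum, mul_left_comm]
    _ ≤ SDP n m₁ m₂ M := sum_mul_le_SDP_of_mem_cut M (h _ (innerMatrix_mem_cut ha hb))

/-- Proposition 1 of the paper: shrinking by the factors α, η_A, η_B maps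
cut d into cut n, whence K_G(d→n) ≤ 1/(α η_A η_B). -/
theorem shrinking_upper_bound (d n m₁ m₂ : ℕ)
    (α ηA ηB : ℝ) (hα : α ∈ Set.Icc (0:ℝ) 1) (hηA : ηA ∈ Set.Icc (0:ℝ) 1)
    (hηB : ηB ∈ Set.Icc (0:ℝ) 1)
    (a : Fin m₁ → EuclideanSpace ℝ (Fin d)) (b : Fin m₂ → EuclideanSpace ℝ (Fin d))
    (ha : ∀ x, ‖a x‖ = 1) (hb : ∀ y, ‖b y‖ = 1)
    (P : Matrix (Fin m₁) (Fin m₂) ℝ) (hP : ∀ x y, P x y = (inner ℝ (a x) (b y) : ℝ))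
    (hA : ∀ v : EuclideanSpace ℝ (Fin d), ‖v‖ = ηA → v ∈ convexHull ℝ (Set.range a))
    (hB : ∀ w : EuclideanSpace ℝ (Fin d), ‖w‖ = ηB → w ∈ convexHull ℝ (Set.range b))
    (hαP : α • P ∈ cut n m₁ m₂)
    (N : Matrix (Fin m₁) (Fin m₂) ℝ) (hN : N ∈ cut d m₁ m₂) :
    (α * ηA * ηB) • N ∈ cut n m₁ m₂ ∧
      ∀ M : Matrix (Fin m₁) (Fin m₂) ℝ,
        α * ηA * ηB * SDP d m₁ m₂ M ≤ SDP n m₁ m₂ M := by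
  obtain rfl : P = innerMatrix a b := Matrix.ext hP
  have hshrink : ∀ N ∈ cut d m₁ m₂, (α * ηA * ηB) • N ∈ cut n m₁ m₂ := fun _ ↦
    smul_mem_cut_of_sphere_subset_convexHull hηA.1 hηB.1 hA hB hαP
  have hc : 0 ≤ α * ηA * ηB := mul_nonneg (mul_nonneg hα.1 hηA.1) hηB.1
  exact ⟨hshrink N hN,
    mul_SDP_le_SDP_of_smul_mem_cut hc ⟨_, innerMatrix_mem_cut ha hb⟩ hshrink⟩
end

section
/- For the 3×3 matrix M with M_{xy} = cos(2π(x−y)/3) (the Gram matrix of the hexagon/trine directions in the plane), SDP_2(M) = 9/2 and SDP_1(M) = 4, hence K_G(2) ≥ 9/8. -/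
/-- The generalised Grothendieck constant `K_G(d → n)`, the supremum of the ratios
`SDP_d(M) / SDP_n(M)` over all real matrices `M` of all sizes. -/
noncomputable def KG (d n : ℕ) : ℝ :=
  sSup { r : ℝ | ∃ (m₁ m₂ : ℕ) (M : Matrix (Fin m₁) (Fin m₂) ℝ),
    0 < SDP n m₁ m₂ M ∧ r = SDP d m₁ m₂ M / SDP n m₁ m₂ M }

/-!
Since the matrix is `(3/2) (I - J/3)`, the objective is `(3 ∑ ⟪a x, b x⟫ - ⟪∑ a, ∑ b⟫) / 2`.
Cauchy–Schwarz for `∑ x, (a x - b x)` bounds this by `(18 - ‖∑ a‖² - ‖∑ b‖²) / 4`: at most `9/2` in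
every dimension, with equality for the trine, and at most `4` for signs, since three signs never
sum to `0`; the signs `(1, 1, -1)` attain it. The ratio set defining `KG d 1` is bounded by `d`:
each coordinate of a unit-vector solution is a fractional sign assignment, and since the
objective is linear in each side separately, it can be rounded to signs without decreasing it.
-/

open Real Matrix Finset
open scoped RealInnerProductSpace

section SDPValue

variable {E : Type*} [NormedAddCommGroup E] [InnerProductSpace ℝ E] {m₁ m₂ : ℕ}

noncomputable def sdpValue (M : Matrix (Fin m₁) (Fin m₂) ℝ) (a : Fin m₁ → E) (b : Fin m₂ → E) :
    ℝ :=
  ∑ x, ∑ y, M x y * ⟪a x, b y⟫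

end SDPValue

section SDP

variable {k m₁ m₂ : ℕ} {M : Matrix (Fin m₁) (Fin m₂) ℝ}

theorem sdpValue_le_sum_abs {a : Fin m₁ → EuclideanSpace ℝ (Fin k)}
    {b : Fin m₂ → EuclideanSpace ℝ (Fin k)} (ha : ∀ x, ‖a x‖ = 1) (hb : ∀ y, ‖b y‖ = 1) :
    sdpValue M a b ≤ ∑ x, ∑ y, |M x y| := by
  refine sum_le_sum fun x _ => sum_le_sum fun y _ => ?_
  have : |⟪a x, b y⟫| ≤ 1 := by simpa [ha x, hb y] using abs_real_inner_le_norm (a x) (b y)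
  calc M x y * ⟪a x, b y⟫ ≤ |M x y| * |⟪a x, b y⟫| := by rw [← abs_mul]; exact le_abs_self _
    _ ≤ |M x y| := mul_le_of_le_one_right (abs_nonneg _) this

theorem le_SDP {a : Fin m₁ → EuclideanSpace ℝ (Fin k)} {b : Fin m₂ → EuclideanSpace ℝ (Fin k)}
    (ha : ∀ x, ‖a x‖ = 1) (hb : ∀ y, ‖b y‖ = 1) : sdpValue M a b ≤ SDP k m₁ m₂ M :=
  le_csSup ⟨_, by rintro r ⟨a, b, ha, hb, rfl⟩; exact sdpValue_le_sum_abs ha hb⟩ ⟨a, b, ha, hb, rfl⟩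

theorem SDP_le {c : ℝ} (hc : 0 ≤ c)
    (h : ∀ (a : Fin m₁ → EuclideanSpace ℝ (Fin k)) (b : Fin m₂ → EuclideanSpace ℝ (Fin k)),
      (∀ x, ‖a x‖ = 1) → (∀ y, ‖b y‖ = 1) → sdpValue M a b ≤ c) :
    SDP k m₁ m₂ M ≤ c :=
  Real.sSup_le (by rintro r ⟨a, b, ha, hb, rfl⟩; exact h a b ha hb) hc

end SDP

theorem exists_sign_dotProduct_ge {ι : Type*} [Fintype ι] {c : ι → ℝ} (hc : ∀ i, |c i| ≤ 1)
    (v : ι → ℝ) : ∃ s : ι → ℝ, (∀ i, |s i| = 1) ∧ c ⬝ᵥ v ≤ s ⬝ᵥ v := by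
  refine ⟨fun i => if 0 ≤ v i then 1 else -1, fun i => by dsimp only; split_ifs <;> simp, ?_⟩
  refine sum_le_sum fun i _ => ?_
  calc c i * v i ≤ |c i| * |v i| := by rw [← abs_mul]; exact le_abs_self _
    _ ≤ |v i| := mul_le_of_le_one_left (abs_nonneg _) (hc i)
    _ = _ := by dsimp only; split_ifs with h
                · simp [abs_of_nonneg h]
                · simp [abs_of_neg (not_le.mp h)]

section SDPOne

variable {m₁ m₂ : ℕ} {M : Matrix (Fin m₁) (Fin m₂) ℝ}

theorem sdpValue_eq_sum_dotProduct_mulVec {k : ℕ} (a : Fin m₁ → EuclideanSpace ℝ (Fin k))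
    (b : Fin m₂ → EuclideanSpace ℝ (Fin k)) :
    sdpValue M a b = ∑ i, (fun x => a x i) ⬝ᵥ M *ᵥ (fun y => b y i) := by
  simp only [sdpValue, dotProduct, mulVec, mul_sum, EuclideanSpace.inner_eq_star_dotProduct,
    star_trivial]
  conv_rhs => rw [sum_comm]
  refine sum_congr rfl fun x _ => ?_
  conv_rhs => rw [sum_comm]
  exact sum_congr rfl fun y _ => sum_congr rfl fun i _ => by ring

theorem dotProduct_mulVec_le_SDP_one {c : Fin m₁ → ℝ} {d : Fin m₂ → ℝ} (hc : ∀ x, |c x| ≤ 1)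
    (hd : ∀ y, |d y| ≤ 1) : c ⬝ᵥ M *ᵥ d ≤ SDP 1 m₁ m₂ M := by
  obtain ⟨s, hs, hcs⟩ := exists_sign_dotProduct_ge hc (M *ᵥ d)
  obtain ⟨t, ht, hdt⟩ := exists_sign_dotProduct_ge hd (s ᵥ* M)
  have hst : s ⬝ᵥ M *ᵥ t = sdpValue M (fun x => !₂[s x]) (fun y => !₂[t y]) := by
    simp [sdpValue_eq_sum_dotProduct_mulVec]
  calc c ⬝ᵥ M *ᵥ d ≤ s ⬝ᵥ M *ᵥ d := hcs
    _ = d ⬝ᵥ s ᵥ* M := by rw [dotProduct_mulVec, dotProduct_comm]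
    _ ≤ t ⬝ᵥ s ᵥ* M := hdt
    _ = sdpValue M (fun x => !₂[s x]) (fun y => !₂[t y]) := by
      rw [dotProduct_comm, ← dotProduct_mulVec, hst]
    _ ≤ SDP 1 m₁ m₂ M :=
      le_SDP (by simp [EuclideanSpace.norm_eq, hs]) (by simp [EuclideanSpace.norm_eq, ht])

theorem SDP_one_nonneg : 0 ≤ SDP 1 m₁ m₂ M := by
  simpa using dotProduct_mulVec_le_SDP_one (M := M) (c := 0) (d := 0) (by simp) (by simp)

theorem SDP_le_mul_SDP_one (k : ℕ) : SDP k m₁ m₂ M ≤ k * SDP 1 m₁ m₂ M := by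
  refine SDP_le (mul_nonneg k.cast_nonneg SDP_one_nonneg) fun a b ha hb => ?_
  have hcoord : ∀ (v : EuclideanSpace ℝ (Fin k)), ‖v‖ = 1 → ∀ i, |v i| ≤ 1 := by
    intro v hv i
    simpa [hv] using PiLp.norm_apply_le v i
  rw [sdpValue_eq_sum_dotProduct_mulVec]
  calc ∑ i, (fun x => a x i) ⬝ᵥ M *ᵥ (fun y => b y i) ≤ ∑ _i : Fin k, SDP 1 m₁ m₂ M :=
        sum_le_sum fun i _ => dotProduct_mulVec_le_SDP_one
          (fun x => hcoord _ (ha x) i) (fun y => hcoord _ (hb y) i)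
    _ = k * SDP 1 m₁ m₂ M := by simp

end SDPOne

theorem le_KG_of_SDP_one_pos (d : ℕ) {m₁ m₂ : ℕ} {M : Matrix (Fin m₁) (Fin m₂) ℝ}
    (hM : 0 < SDP 1 m₁ m₂ M) : SDP d m₁ m₂ M / SDP 1 m₁ m₂ M ≤ KG d 1 := by
  refine le_csSup ⟨d, ?_⟩ ⟨m₁, m₂, M, hM, rfl⟩
  rintro r ⟨m₁, m₂, M, hM, rfl⟩
  exact (div_le_iff₀ hM).mpr (SDP_le_mul_SDP_one d)

theorem norm_sum_sq_le_card_mul_sum_norm_sq {E ι : Type*} [SeminormedAddCommGroup E]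
    (s : Finset ι) (f : ι → E) : ‖∑ i ∈ s, f i‖ ^ 2 ≤ #s * ∑ i ∈ s, ‖f i‖ ^ 2 :=
  (pow_le_pow_left₀ (norm_nonneg _) (norm_sum_le s f) 2).trans sq_sum_le_card_mul_sum_sq

theorem cos_two_pi_div_three : cos (2 * π / 3) = -(1 / 2) := by
  rw [show 2 * π / 3 = π - π / 3 by ring, cos_pi_sub, cos_pi_div_three]

theorem cos_two_pi_mul_two_div_three : cos (2 * π * 2 / 3) = -(1 / 2) := by
  rw [show 2 * π * 2 / 3 = π / 3 + π by ring, cos_add_pi, cos_pi_div_three]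

noncomputable def trineGram : Matrix (Fin 3) (Fin 3) ℝ :=
  fun x y => cos (2 * π * ((x : ℝ) - (y : ℝ)) / 3)

theorem trineGram_apply (x y : Fin 3) : trineGram x y = if x = y then 1 else -(1 / 2) := by
  fin_cases x <;> fin_cases y <;>
    norm_num [trineGram, neg_div, cos_two_pi_div_three, cos_two_pi_mul_two_div_three]

section Trine

variable {E : Type*} [NormedAddCommGroup E] [InnerProductSpace ℝ E]

theorem sdpValue_trineGram (a b : Fin 3 → E) :
    sdpValue trineGram a b = (3 * ∑ x, ⟪a x, b x⟫ - ⟪∑ x, a x, ∑ y, b y⟫) / 2 := by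
  simp only [sdpValue, trineGram_apply, Fin.sum_univ_three, Fin.isValue, Fin.reduceEq, ↓reduceIte,
    inner_add_left, inner_add_right]
  ring

theorem sdpValue_trineGram_self {a : Fin 3 → E} (ha : ∀ x, ‖a x‖ = 1) :
    sdpValue trineGram a a = (9 - ‖∑ x, a x‖ ^ 2) / 2 := by
  have hdiag : ∑ x, ⟪a x, a x⟫ = 3 := by simp [ha]
  rw [sdpValue_trineGram, hdiag, real_inner_self_eq_norm_sq]
  ring

theorem sdpValue_trineGram_le {a b : Fin 3 → E} (ha : ∀ x, ‖a x‖ = 1) (hb : ∀ y, ‖b y‖ = 1) :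
    sdpValue trineGram a b ≤ (18 - ‖∑ x, a x‖ ^ 2 - ‖∑ y, b y‖ ^ 2) / 4 := by
  have hdiff : ∑ x, ‖a x - b x‖ ^ 2 = 6 - 2 * ∑ x, ⟪a x, b x⟫ := by
    simp only [norm_sub_sq_real, ha, hb, one_pow, Fin.sum_univ_three]
    ring
  have hcs : ‖∑ x, a x - ∑ y, b y‖ ^ 2 ≤ 3 * ∑ x, ‖a x - b x‖ ^ 2 := by
    simpa [sum_sub_distrib] using norm_sum_sq_le_card_mul_sum_norm_sq univ fun x => a x - b x
  rw [norm_sub_sq_real, hdiff] at hcs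
  rw [sdpValue_trineGram]
  linarith

end Trine

theorem one_le_abs_sum_of_abs_eq_one {s : Fin 3 → ℝ} (hs : ∀ x, |s x| = 1) :
    1 ≤ |∑ x, s x| := by
  have h := fun x => (abs_eq zero_le_one).mp (hs x)
  rcases h 0 with h0 | h0 <;> rcases h 1 with h1 | h1 <;> rcases h 2 with h2 | h2 <;>
    norm_num [Fin.sum_univ_three, h0, h1, h2]

theorem SDP_trineGram_le (k : ℕ) : SDP k 3 3 trineGram ≤ 9 / 2 :=
  SDP_le (by norm_num) fun a b ha hb => by
    have := sdpValue_trineGram_le ha hb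
    linarith [sq_nonneg ‖∑ x, a x‖, sq_nonneg ‖∑ y, b y‖]

theorem norm_eq_abs_apply_zero (v : EuclideanSpace ℝ (Fin 1)) : ‖v‖ = |v 0| := by
  simp [EuclideanSpace.norm_eq, sqrt_sq_eq_abs]

theorem SDP_one_trineGram_le : SDP 1 3 3 trineGram ≤ 4 := by
  refine SDP_le (by norm_num) fun a b ha hb => ?_
  have hsum : ∀ c : Fin 3 → EuclideanSpace ℝ (Fin 1), (∀ x, ‖c x‖ = 1) → 1 ≤ ‖∑ x, c x‖ ^ 2 := by
    intro c hc
    simp only [norm_eq_abs_apply_zero] at hc ⊢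
    rw [WithLp.ofLp_sum, Finset.sum_apply]
    nlinarith [one_le_abs_sum_of_abs_eq_one hc]
  linarith [sdpValue_trineGram_le ha hb, hsum a ha, hsum b hb]

noncomputable def trine : Fin 3 → EuclideanSpace ℝ (Fin 2) :=
  ![!₂[1, 0], !₂[-1 / 2, √3 / 2], !₂[-1 / 2, -(√3 / 2)]]

theorem norm_trine (x : Fin 3) : ‖trine x‖ = 1 := by
  fin_cases x <;> norm_num [trine, EuclideanSpace.norm_eq, Fin.sum_univ_two, div_pow]

theorem sum_trine : ∑ x, trine x = 0 := by
  ext i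
  fin_cases i <;> norm_num [trine, Fin.sum_univ_three, Matrix.cons_val_two]

theorem SDP_two_trineGram : SDP 2 3 3 trineGram = 9 / 2 := by
  refine (SDP_trineGram_le 2).antisymm ?_
  calc (9 / 2 : ℝ) = sdpValue trineGram trine trine := by
        rw [sdpValue_trineGram_self norm_trine, sum_trine]; norm_num
    _ ≤ _ := le_SDP norm_trine norm_trine

noncomputable def trineSigns : Fin 3 → EuclideanSpace ℝ (Fin 1) :=
  ![!₂[1], !₂[1], !₂[-1]]

theorem norm_trineSigns (x : Fin 3) : ‖trineSigns x‖ = 1 := by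
  fin_cases x <;> simp [trineSigns, norm_eq_abs_apply_zero]

theorem SDP_one_trineGram : SDP 1 3 3 trineGram = 4 := by
  refine SDP_one_trineGram_le.antisymm ?_
  calc (4 : ℝ) = sdpValue trineGram trineSigns trineSigns := by
        rw [sdpValue_trineGram_self norm_trineSigns, norm_eq_abs_apply_zero]
        norm_num [trineSigns, Fin.sum_univ_three, Matrix.cons_val_two]
    _ ≤ _ := le_SDP norm_trineSigns norm_trineSigns

theorem hexagon_bound :
    SDP 2 3 3 (fun x y : Fin 3 => Real.cos (2 * Real.pi * ((x : ℝ) - (y : ℝ)) / 3)) = 9 / 2 ∧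
    SDP 1 3 3 (fun x y : Fin 3 => Real.cos (2 * Real.pi * ((x : ℝ) - (y : ℝ)) / 3)) = 4 ∧
    9 / 8 ≤ KG 2 1 := by
  refine ⟨SDP_two_trineGram, SDP_one_trineGram, ?_⟩
  calc (9 / 8 : ℝ) = SDP 2 3 3 trineGram / SDP 1 3 3 trineGram := by
        rw [SDP_two_trineGram, SDP_one_trineGram]; norm_num
    _ ≤ KG 2 1 := le_KG_of_SDP_one_pos 2 (by rw [SDP_one_trineGram]; norm_num)
end
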